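/- Coercivity of the regularization functional for norm-coercive operators: let op be a map assigning to each w ∈ A₁ a Lebesgue-measurable function op[w] : Ω₂ → K₂, and suppose op is norm-coercive, i.e. for every sequence (w_n) in A₁, if ∫_{Ω₁}‖w_n‖^{p₁} dx → ∞ then ∫_{Ω₂}‖op[w_n]‖^{p₂} dx → ∞. Let v : Ω₂ → K₂ be measurable with ∫_{Ω₂}‖v‖^{p₂} dx < ∞, α > 0, and set F(w) := ∫_{Ω₂} d₂(op[w](x),v(x))^{p₂} dx + α·∫_{Ω₁×Ω₁} d₁(w(x),w(y))^{p₁}·ρ(x−y)/‖x−y‖^{N+p₁s} d(x,y). Then F is coercive: for every sequence (w_n) in A₁ with ∫_{Ω₁}‖w_n(x)‖^{p₁} dx + ∫_{Ω₁×Ω₁}‖w_n(x)−w_n(y)‖^{p₁}/‖x−y‖^{N+p₁s} d(x,y) → ∞ one has F(w_n) → ∞. -/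

import Mathlib

open MeasureTheory Filter Set
open scoped Topology ENNReal

/-- The Gagliardo double integral `∫_{Ω×Ω} ‖w(x)-w(y)‖^p / ‖x-y‖^{N+ps}`. -/
noncomputable def gagliardoEnergy {N M : ℕ}
    (Ω : Set (EuclideanSpace ℝ (Fin N))) (p s : ℝ)
    (w : EuclideanSpace ℝ (Fin N) → EuclideanSpace ℝ (Fin M)) : ℝ≥0∞ :=
  ∫⁻ z in Ω ×ˢ Ω,
    ENNReal.ofReal ‖w z.1 - w z.2‖ ^ p /
      ENNReal.ofReal (‖z.1 - z.2‖ ^ ((N : ℝ) + p * s))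

/-- Membership in the admissible class `W^{s,p}(Ω,K)`: measurable, `K`-valued on `Ω`,
`L^p`-finite, with finite Gagliardo energy. -/
def Admissible {N M : ℕ}
    (Ω : Set (EuclideanSpace ℝ (Fin N))) (p s : ℝ)
    (K : Set (EuclideanSpace ℝ (Fin M)))
    (w : EuclideanSpace ℝ (Fin N) → EuclideanSpace ℝ (Fin M)) : Prop :=
  Measurable w ∧ (∀ x ∈ Ω, w x ∈ K) ∧
    (∫⁻ x in Ω, ENNReal.ofReal ‖w x‖ ^ p) < ⊤ ∧
    gagliardoEnergy Ω p s w < ⊤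

lemma my_add_rpow_le (a b : ℝ≥0∞) {p : ℝ} (hp : 0 ≤ p) :
    (a + b) ^ p ≤ 2 ^ p * (a ^ p + b ^ p) := by
  calc (a + b) ^ p ≤ (2 * max a b) ^ p := by
        apply ENNReal.rpow_le_rpow _ hp
        rw [two_mul]
        exact add_le_add (le_max_left a b) (le_max_right a b)
    _ = 2 ^ p * (max a b) ^ p := ENNReal.mul_rpow_of_nonneg _ _ hp
    _ ≤ 2 ^ p * (a ^ p + b ^ p) := by
        apply mul_le_mul_right
        rcases max_cases a b with ⟨h, _⟩ | ⟨h, _⟩ <;> rw [h]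
        · exact le_self_add
        · exact le_add_self

lemma my_le_inv_mul {c x y : ℝ≥0∞} (hc0 : c ≠ 0) (hct : c ≠ ⊤) (h : c * x ≤ y) :
    x ≤ c⁻¹ * y := by
  calc x = c⁻¹ * (c * x) := by rw [← mul_assoc, ENNReal.inv_mul_cancel hc0 hct, one_mul]
    _ ≤ c⁻¹ * y := mul_le_mul_right h _

/-- Coercivity of the regularization functional for norm-coercive operators. -/
theorem functional_coercive_of_normCoercive_operator
    (N M₁ M₂ : ℕ) (hN : 1 ≤ N) (hM₁ : 1 ≤ M₁) (hM₂ : 1 ≤ M₂)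
    (Ω₁ Ω₂ : Set (EuclideanSpace ℝ (Fin N)))
    (hΩ₁ : MeasurableSet Ω₁) (hΩ₂ : MeasurableSet Ω₂)
    (hΩ₁ne : Ω₁.Nonempty) (hΩ₂ne : Ω₂.Nonempty)
    (hΩ₁bd : Bornology.IsBounded Ω₁) (hΩ₂bd : Bornology.IsBounded Ω₂)
    (p₁ p₂ s : ℝ) (hp₁ : 1 < p₁) (hp₂ : 1 < p₂) (hs0 : 0 < s) (hs1 : s < 1)
    (K₁ : Set (EuclideanSpace ℝ (Fin M₁))) (hK₁ne : K₁.Nonempty) (hK₁cl : IsClosed K₁)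
    (K₂ : Set (EuclideanSpace ℝ (Fin M₂))) (hK₂ne : K₂.Nonempty) (hK₂cl : IsClosed K₂)
    (d₁ : EuclideanSpace ℝ (Fin M₁) → EuclideanSpace ℝ (Fin M₁) → ℝ)
    (hd₁_self : ∀ a ∈ K₁, d₁ a a = 0)
    (hd₁_symm : ∀ a ∈ K₁, ∀ b ∈ K₁, d₁ a b = d₁ b a)
    (hd₁_tri : ∀ a ∈ K₁, ∀ b ∈ K₁, ∀ c ∈ K₁, d₁ a c ≤ d₁ a b + d₁ b c)
    (hd₁_lower : ∀ a ∈ K₁, ∀ b ∈ K₁, ‖a - b‖ ≤ d₁ a b)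
    (d₂ : EuclideanSpace ℝ (Fin M₂) → EuclideanSpace ℝ (Fin M₂) → ℝ)
    (hd₂_self : ∀ a ∈ K₂, d₂ a a = 0)
    (hd₂_symm : ∀ a ∈ K₂, ∀ b ∈ K₂, d₂ a b = d₂ b a)
    (hd₂_tri : ∀ a ∈ K₂, ∀ b ∈ K₂, ∀ c ∈ K₂, d₂ a c ≤ d₂ a b + d₂ b c)
    (hd₂_lower : ∀ a ∈ K₂, ∀ b ∈ K₂, ‖a - b‖ ≤ d₂ a b)
    (ρ : EuclideanSpace ℝ (Fin N) → ℝ) (hρmeas : Measurable ρ) (hρ0 : ∀ z, 0 ≤ ρ z)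
    (τ η : ℝ) (hτ : 0 < τ) (hη : 0 < η)
    (hlevel : {z : EuclideanSpace ℝ (Fin N) | τ ≤ ρ z} = Metric.closedBall 0 η)
    (op : (EuclideanSpace ℝ (Fin N) → EuclideanSpace ℝ (Fin M₁)) →
      EuclideanSpace ℝ (Fin N) → EuclideanSpace ℝ (Fin M₂))
    (hop : ∀ w, Admissible Ω₁ p₁ s K₁ w →
      Measurable (op w) ∧ ∀ x ∈ Ω₂, op w x ∈ K₂)
    (hop_coercive : ∀ w : ℕ → EuclideanSpace ℝ (Fin N) → EuclideanSpace ℝ (Fin M₁),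
      (∀ n, Admissible Ω₁ p₁ s K₁ (w n)) →
      Tendsto (fun n => ∫⁻ x in Ω₁, ENNReal.ofReal ‖w n x‖ ^ p₁) atTop (𝓝 ⊤) →
      Tendsto (fun n => ∫⁻ x in Ω₂, ENNReal.ofReal ‖op (w n) x‖ ^ p₂) atTop (𝓝 ⊤))
    (v : EuclideanSpace ℝ (Fin N) → EuclideanSpace ℝ (Fin M₂))
    (hv : Measurable v) (hvK : ∀ x ∈ Ω₂, v x ∈ K₂)
    (hvLp : (∫⁻ x in Ω₂, ENNReal.ofReal ‖v x‖ ^ p₂) < ⊤)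
    (α : ℝ) (hα : 0 < α) :
    ∀ w : ℕ → EuclideanSpace ℝ (Fin N) → EuclideanSpace ℝ (Fin M₁),
      (∀ n, Admissible Ω₁ p₁ s K₁ (w n)) →
      Tendsto (fun n =>
          (∫⁻ x in Ω₁, ENNReal.ofReal ‖w n x‖ ^ p₁) + gagliardoEnergy Ω₁ p₁ s (w n))
        atTop (𝓝 ⊤) →
      Tendsto (fun n =>
          (∫⁻ x in Ω₂, ENNReal.ofReal (d₂ (op (w n) x) (v x)) ^ p₂) +
            ENNReal.ofReal α * ∫⁻ z in Ω₁ ×ˢ Ω₁,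
              ENNReal.ofReal (d₁ (w n z.1) (w n z.2)) ^ p₁ *
                ENNReal.ofReal (ρ (z.1 - z.2)) /
                ENNReal.ofReal (‖z.1 - z.2‖ ^ ((N : ℝ) + p₁ * s)))
        atTop (𝓝 ⊤) := by
  intro w hw hLG
  have hp₁0 : (0:ℝ) ≤ p₁ := le_of_lt (lt_trans one_pos hp₁)
  have hp₂0 : (0:ℝ) ≤ p₂ := le_of_lt (lt_trans one_pos hp₂)
  set q : ℝ := (N : ℝ) + p₁ * s with hqdef
  have hq0 : 0 < q := by
    have : (1:ℝ) ≤ (N:ℝ) := by exact_mod_cast hN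
    nlinarith
  set L : ℕ → ℝ≥0∞ := fun n => ∫⁻ x in Ω₁, ENNReal.ofReal ‖w n x‖ ^ p₁ with hLdef
  set G : ℕ → ℝ≥0∞ := fun n => gagliardoEnergy Ω₁ p₁ s (w n) with hGdef
  set fid : ℕ → ℝ≥0∞ :=
    fun n => ∫⁻ x in Ω₂, ENNReal.ofReal (d₂ (op (w n) x) (v x)) ^ p₂ with hfiddef
  set reg : ℕ → ℝ≥0∞ := fun n => ∫⁻ z in Ω₁ ×ˢ Ω₁,
      ENNReal.ofReal (d₁ (w n z.1) (w n z.2)) ^ p₁ * ENNReal.ofReal (ρ (z.1 - z.2)) /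
        ENNReal.ofReal (‖z.1 - z.2‖ ^ q) with hregdef
  have hLG' : Tendsto (fun n => L n + G n) atTop (𝓝 ⊤) := hLG
  show Tendsto (fun n => fid n + ENNReal.ofReal α * reg n) atTop (𝓝 ⊤)
  set S : Set (EuclideanSpace ℝ (Fin N) × EuclideanSpace ℝ (Fin N)) :=
    {z | ‖z.1 - z.2‖ ≤ η} with hSdef
  have hS : MeasurableSet S :=
    measurableSet_le ((measurable_fst.sub measurable_snd).norm) measurable_const
  set T : ℕ → ℝ≥0∞ := fun n => ∫⁻ z in (Ω₁ ×ˢ Ω₁) ∩ S,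
      ENNReal.ofReal ‖w n z.1 - w n z.2‖ ^ p₁ / ENNReal.ofReal (‖z.1 - z.2‖ ^ q) with hTdef
  have hμΩ₁ : (volume Ω₁) < ⊤ := hΩ₁bd.measure_lt_top
  -- constants
  have hηq : (0:ℝ) < η ^ q := Real.rpow_pos_of_pos hη q
  set C : ℝ≥0∞ := (ENNReal.ofReal (η ^ q))⁻¹ * (2 ^ p₁ * (2 * volume Ω₁)) with hCdef
  have hCne : C ≠ ⊤ := by
    apply ENNReal.mul_ne_top
    · exact ENNReal.inv_ne_top.2 (by simpa [ENNReal.ofReal_eq_zero, not_le] using hηq)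
    · exact ENNReal.mul_ne_top (ENNReal.rpow_ne_top_of_nonneg hp₁0 ENNReal.ofNat_ne_top)
        (ENNReal.mul_ne_top (by norm_num) hμΩ₁.ne)
  -- Step 1: τ • T ≤ reg
  have hτT : ∀ n, ENNReal.ofReal τ * T n ≤ reg n := by
    intro n
    rw [hTdef, ← lintegral_const_mul' _ _ ENNReal.ofReal_ne_top]
    refine le_trans (le_trans (lintegral_mono_ae ?_) (lintegral_mono_set inter_subset_left))
      le_rfl
    refine (ae_restrict_iff' ((hΩ₁.prod hΩ₁).inter hS)).2 (ae_of_all _ ?_)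
    rintro ⟨z1, z2⟩ ⟨⟨h1, h2⟩, hz⟩
    have hK1 : w n z1 ∈ K₁ := (hw n).2.1 z1 h1
    have hK2 : w n z2 ∈ K₁ := (hw n).2.1 z2 h2
    have hd : ‖w n z1 - w n z2‖ ≤ d₁ (w n z1) (w n z2) := hd₁_lower _ hK1 _ hK2
    have hρτ : τ ≤ ρ (z1 - z2) := by
      have hmem : z1 - z2 ∈ Metric.closedBall (0 : EuclideanSpace ℝ (Fin N)) η := by
        simpa [hSdef, mem_closedBall_zero_iff] using hz
      rw [← hlevel] at hmem
      exact hmem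
    simp only
    rw [← mul_div_assoc]
    apply ENNReal.div_le_div_right
    calc ENNReal.ofReal τ * ENNReal.ofReal ‖w n z1 - w n z2‖ ^ p₁
        ≤ ENNReal.ofReal (ρ (z1 - z2)) * ENNReal.ofReal (d₁ (w n z1) (w n z2)) ^ p₁ :=
          mul_le_mul' (ENNReal.ofReal_le_ofReal hρτ)
            (ENNReal.rpow_le_rpow (ENNReal.ofReal_le_ofReal hd) hp₁0)
      _ = ENNReal.ofReal (d₁ (w n z1) (w n z2)) ^ p₁ * ENNReal.ofReal (ρ (z1 - z2)) :=
          mul_comm _ _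
  -- Step 2: G ≤ T + C * L
  have hGT : ∀ n, G n ≤ T n + C * L n := by
    intro n
    have hwm : Measurable (w n) := (hw n).1
    set f : EuclideanSpace ℝ (Fin N) → ℝ≥0∞ := fun x => ENNReal.ofReal ‖w n x‖ ^ p₁ with hfdef
    have hfm : Measurable f := (hwm.norm.ennreal_ofReal).pow_const p₁
    have hsplit : G n = T n + ∫⁻ z in (Ω₁ ×ˢ Ω₁) \ S,
        ENNReal.ofReal ‖w n z.1 - w n z.2‖ ^ p₁ / ENNReal.ofReal (‖z.1 - z.2‖ ^ q) := by
      rw [hGdef, hTdef]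
      simp only [gagliardoEnergy]
      exact (lintegral_inter_add_diff _ _ hS).symm
    rw [hsplit]
    apply add_le_add_right
    -- far part
    have hfar1 : (∫⁻ z in (Ω₁ ×ˢ Ω₁) \ S,
        ENNReal.ofReal ‖w n z.1 - w n z.2‖ ^ p₁ / ENNReal.ofReal (‖z.1 - z.2‖ ^ q))
        ≤ ∫⁻ z in (Ω₁ ×ˢ Ω₁) \ S,
          ENNReal.ofReal ‖w n z.1 - w n z.2‖ ^ p₁ * (ENNReal.ofReal (η ^ q))⁻¹ := by
      refine lintegral_mono_ae ?_
      refine (ae_restrict_iff' ((hΩ₁.prod hΩ₁).diff hS)).2 (ae_of_all _ ?_)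
      rintro ⟨z1, z2⟩ ⟨-, hz⟩
      have hgt : η < ‖z1 - z2‖ := lt_of_not_ge hz
      have : ENNReal.ofReal (η ^ q) ≤ ENNReal.ofReal (‖z1 - z2‖ ^ q) :=
        ENNReal.ofReal_le_ofReal (Real.rpow_le_rpow (le_of_lt hη) (le_of_lt hgt) (le_of_lt hq0))
      calc ENNReal.ofReal ‖w n z1 - w n z2‖ ^ p₁ / ENNReal.ofReal (‖z1 - z2‖ ^ q)
          ≤ ENNReal.ofReal ‖w n z1 - w n z2‖ ^ p₁ / ENNReal.ofReal (η ^ q) :=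
            ENNReal.div_le_div_left this _
        _ = ENNReal.ofReal ‖w n z1 - w n z2‖ ^ p₁ * (ENNReal.ofReal (η ^ q))⁻¹ :=
            div_eq_mul_inv _ _
    have hfar2 : (∫⁻ z in (Ω₁ ×ˢ Ω₁) \ S,
          ENNReal.ofReal ‖w n z.1 - w n z.2‖ ^ p₁ * (ENNReal.ofReal (η ^ q))⁻¹)
        ≤ (∫⁻ z in Ω₁ ×ˢ Ω₁, ENNReal.ofReal ‖w n z.1 - w n z.2‖ ^ p₁)
            * (ENNReal.ofReal (η ^ q))⁻¹ := by
      rw [lintegral_mul_const' _ _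
        (ENNReal.inv_ne_top.2 (by simpa [ENNReal.ofReal_eq_zero, not_le] using hηq))]
      exact mul_le_mul_left (lintegral_mono_set diff_subset) _
    have hnum : (∫⁻ z in Ω₁ ×ˢ Ω₁, ENNReal.ofReal ‖w n z.1 - w n z.2‖ ^ p₁)
        ≤ 2 ^ p₁ * (2 * volume Ω₁ * L n) := by
      have hpt : ∀ z : EuclideanSpace ℝ (Fin N) × EuclideanSpace ℝ (Fin N),
          ENNReal.ofReal ‖w n z.1 - w n z.2‖ ^ p₁ ≤ 2 ^ p₁ * (f z.1 + f z.2) := by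
        intro z
        have h1 : ENNReal.ofReal ‖w n z.1 - w n z.2‖
            ≤ ENNReal.ofReal ‖w n z.1‖ + ENNReal.ofReal ‖w n z.2‖ := by
          refine le_trans (ENNReal.ofReal_le_ofReal (norm_sub_le _ _)) ENNReal.ofReal_add_le
        calc ENNReal.ofReal ‖w n z.1 - w n z.2‖ ^ p₁
            ≤ (ENNReal.ofReal ‖w n z.1‖ + ENNReal.ofReal ‖w n z.2‖) ^ p₁ :=
              ENNReal.rpow_le_rpow h1 hp₁0
          _ ≤ 2 ^ p₁ * (f z.1 + f z.2) := my_add_rpow_le _ _ hp₁0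
      calc (∫⁻ z in Ω₁ ×ˢ Ω₁, ENNReal.ofReal ‖w n z.1 - w n z.2‖ ^ p₁)
          ≤ ∫⁻ z in Ω₁ ×ˢ Ω₁, 2 ^ p₁ * (f z.1 + f z.2) := lintegral_mono fun z => hpt z
        _ = 2 ^ p₁ * ∫⁻ z in Ω₁ ×ˢ Ω₁, (f z.1 + f z.2) :=
            lintegral_const_mul' _ _ (ENNReal.rpow_ne_top_of_nonneg hp₁0 ENNReal.ofNat_ne_top)
        _ = 2 ^ p₁ * (2 * volume Ω₁ * L n) := by
            congr 1
            have hprod : (∫⁻ z in Ω₁ ×ˢ Ω₁,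
                (f z.1 + f z.2) ∂(volume : Measure (EuclideanSpace ℝ (Fin N) × EuclideanSpace ℝ (Fin N))))
                = ∫⁻ z, (f z.1 + f z.2)
                    ∂((volume.restrict Ω₁).prod (volume.restrict Ω₁)) := by
              rw [Measure.volume_eq_prod, Measure.prod_restrict]
            have hgm : Measurable fun z : EuclideanSpace ℝ (Fin N) × EuclideanSpace ℝ (Fin N) =>
                f z.1 + f z.2 := (hfm.comp measurable_fst).add (hfm.comp measurable_snd)
            rw [hprod, lintegral_prod _ hgm.aemeasurable]
            simp only
            have hinner : ∀ x, (∫⁻ y in Ω₁, (f x + f y)) = f x * volume Ω₁ + L n := by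
              intro x
              rw [lintegral_add_right _ hfm, setLIntegral_const]
            simp_rw [hinner]
            rw [lintegral_add_right _ measurable_const,
              lintegral_mul_const' _ _ hμΩ₁.ne, setLIntegral_const]
            rw [hLdef]
            ring
    calc (∫⁻ z in (Ω₁ ×ˢ Ω₁) \ S,
          ENNReal.ofReal ‖w n z.1 - w n z.2‖ ^ p₁ / ENNReal.ofReal (‖z.1 - z.2‖ ^ q))
        ≤ (∫⁻ z in Ω₁ ×ˢ Ω₁, ENNReal.ofReal ‖w n z.1 - w n z.2‖ ^ p₁)
            * (ENNReal.ofReal (η ^ q))⁻¹ := le_trans hfar1 hfar2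
      _ ≤ (2 ^ p₁ * (2 * volume Ω₁ * L n)) * (ENNReal.ofReal (η ^ q))⁻¹ :=
          mul_le_mul_left hnum _
      _ = C * L n := by rw [hCdef]; ring
  -- Step 3: op integral bound
  set V : ℝ≥0∞ := ∫⁻ x in Ω₂, ENNReal.ofReal ‖v x‖ ^ p₂ with hVdef
  have hopint : ∀ n, (∫⁻ x in Ω₂, ENNReal.ofReal ‖op (w n) x‖ ^ p₂)
      ≤ 2 ^ p₂ * (fid n + V) := by
    intro n
    have step : ∀ x ∈ Ω₂, ENNReal.ofReal ‖op (w n) x‖ ^ p₂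
        ≤ 2 ^ p₂ * (ENNReal.ofReal (d₂ (op (w n) x) (v x)) ^ p₂
          + ENNReal.ofReal ‖v x‖ ^ p₂) := by
      intro x hx
      have hKop : op (w n) x ∈ K₂ := (hop (w n) (hw n)).2 x hx
      have hKv : v x ∈ K₂ := hvK x hx
      have h1 : ‖op (w n) x‖ ≤ d₂ (op (w n) x) (v x) + ‖v x‖ := by
        have htri : ‖op (w n) x‖ ≤ ‖op (w n) x - v x‖ + ‖v x‖ := by
          calc ‖op (w n) x‖ = ‖(op (w n) x - v x) + v x‖ := by rw [sub_add_cancel]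
            _ ≤ ‖op (w n) x - v x‖ + ‖v x‖ := norm_add_le _ _
        exact le_trans htri (add_le_add_left (hd₂_lower _ hKop _ hKv) _)
      have h2 : ENNReal.ofReal ‖op (w n) x‖
          ≤ ENNReal.ofReal (d₂ (op (w n) x) (v x)) + ENNReal.ofReal ‖v x‖ :=
        le_trans (ENNReal.ofReal_le_ofReal h1) ENNReal.ofReal_add_le
      calc ENNReal.ofReal ‖op (w n) x‖ ^ p₂
          ≤ (ENNReal.ofReal (d₂ (op (w n) x) (v x)) + ENNReal.ofReal ‖v x‖) ^ p₂ :=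
            ENNReal.rpow_le_rpow h2 hp₂0
        _ ≤ 2 ^ p₂ * (ENNReal.ofReal (d₂ (op (w n) x) (v x)) ^ p₂
            + ENNReal.ofReal ‖v x‖ ^ p₂) := my_add_rpow_le _ _ hp₂0
    calc (∫⁻ x in Ω₂, ENNReal.ofReal ‖op (w n) x‖ ^ p₂)
        ≤ ∫⁻ x in Ω₂, 2 ^ p₂ * (ENNReal.ofReal (d₂ (op (w n) x) (v x)) ^ p₂
            + ENNReal.ofReal ‖v x‖ ^ p₂) :=
          lintegral_mono_ae ((ae_restrict_iff' hΩ₂).2 (ae_of_all _ step))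
      _ = 2 ^ p₂ * (fid n + V) := by
          rw [lintegral_const_mul' _ _ (ENNReal.rpow_ne_top_of_nonneg hp₂0 ENNReal.ofNat_ne_top),
            lintegral_add_right _ ((hv.norm.ennreal_ofReal).pow_const p₂)]
  -- Step 4: contradiction setup
  by_contra hF
  rw [ENNReal.tendsto_nhds_top_iff_nat] at hF
  push_neg at hF
  obtain ⟨m, hm⟩ := hF
  have hm' : ∃ᶠ n in atTop, fid n + ENNReal.ofReal α * reg n ≤ (m : ℝ≥0∞) :=
    hm
  obtain ⟨φ, hφmono, hφ⟩ := Filter.extraction_of_frequently_atTop hm'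
  have hα0 : ENNReal.ofReal α ≠ 0 := by simpa [ENNReal.ofReal_eq_zero, not_le] using hα
  have hτ0 : ENNReal.ofReal τ ≠ 0 := by simpa [ENNReal.ofReal_eq_zero, not_le] using hτ
  have hfidbd : ∀ k, fid (φ k) ≤ (m : ℝ≥0∞) := fun k => le_trans le_self_add (hφ k)
  have hregbd : ∀ k, reg (φ k) ≤ (ENNReal.ofReal α)⁻¹ * m := fun k =>
    my_le_inv_mul hα0 ENNReal.ofReal_ne_top (le_trans le_add_self (hφ k))
  set K' : ℝ≥0∞ := (ENNReal.ofReal τ)⁻¹ * ((ENNReal.ofReal α)⁻¹ * m) with hK'def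
  have hTbd : ∀ k, T (φ k) ≤ K' := fun k =>
    my_le_inv_mul hτ0 ENNReal.ofReal_ne_top (le_trans (hτT (φ k)) (hregbd k))
  have hK't : K' ≠ ⊤ := by
    apply ENNReal.mul_ne_top (ENNReal.inv_ne_top.2 hτ0)
    exact ENNReal.mul_ne_top (ENNReal.inv_ne_top.2 hα0) (ENNReal.natCast_ne_top m)
  have h1C0 : (1 : ℝ≥0∞) + C ≠ 0 := by
    simp
  have h1Ct : (1 : ℝ≥0∞) + C ≠ ⊤ := ENNReal.add_ne_top.2 ⟨ENNReal.one_ne_top, hCne⟩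
  -- L along φ tends to ⊤
  have hLtop : Tendsto (fun k => L (φ k)) atTop (𝓝 ⊤) := by
    rw [ENNReal.tendsto_nhds_top_iff_nat]
    intro k
    have hB : K' + (1 + C) * (k : ℝ≥0∞) < ⊤ := by
      apply ENNReal.add_lt_top.2
      refine ⟨hK't.lt_top, ?_⟩
      exact ENNReal.mul_lt_top h1Ct.lt_top (ENNReal.natCast_lt_top k)
    have hev := (hLG'.comp (hφmono.tendsto_atTop)).eventually (Ioi_mem_nhds hB)
    filter_upwards [hev] with j hj
    simp only [Function.comp, mem_Ioi] at hj
    have hchain : L (φ j) + G (φ j) ≤ K' + (1 + C) * L (φ j) := by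
      calc L (φ j) + G (φ j) ≤ L (φ j) + (T (φ j) + C * L (φ j)) :=
            add_le_add_right (hGT (φ j)) _
        _ ≤ L (φ j) + (K' + C * L (φ j)) := by
            exact add_le_add_right (add_le_add_left (hTbd j) _) _
        _ = K' + (1 + C) * L (φ j) := by ring
    have h2 : K' + (1 + C) * (k : ℝ≥0∞) < K' + (1 + C) * L (φ j) :=
      lt_of_lt_of_le hj hchain
    have h3 : (1 + C) * (k : ℝ≥0∞) < (1 + C) * L (φ j) :=
      (ENNReal.add_lt_add_iff_left hK't).1 h2
    exact lt_of_not_ge fun h => absurd h3 (not_lt.2 (mul_le_mul_right h _))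
  -- coercivity gives contradiction
  have hcoer := hop_coercive (fun k => w (φ k)) (fun k => hw (φ k)) hLtop
  set B₂ : ℝ≥0∞ := 2 ^ p₂ * ((m : ℝ≥0∞) + V) with hB₂def
  have hB₂t : B₂ < ⊤ := by
    apply ENNReal.mul_lt_top (ENNReal.rpow_ne_top_of_nonneg hp₂0 ENNReal.ofNat_ne_top).lt_top
    exact ENNReal.add_lt_top.2 ⟨ENNReal.natCast_lt_top m, hvLp⟩
  have hev := hcoer.eventually (Ioi_mem_nhds hB₂t)
  obtain ⟨k, hk⟩ := hev.exists
  have hle : (∫⁻ x in Ω₂, ENNReal.ofReal ‖op (w (φ k)) x‖ ^ p₂) ≤ B₂ := by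
    refine le_trans (hopint (φ k)) ?_
    rw [hB₂def]
    exact mul_le_mul_right (add_le_add_left (hfidbd k) _) _
  exact absurd hle (not_le.2 hk)
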